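/- Let V_{m,3} ⊆ ℚ^m be the set of points with at most 2 distinct coordinate values, and let I_{m,3} be the ideal of polynomials in ℚ[x₁,…,x_m] vanishing on V_{m,3}. For a graph G of diameter at most 2, with f_G the product of path polynomials P_{i,j} (where P_{i,j} = 1 for adjacent (v_i, v_j) and P_{i,j} = ∑_{paths v_i−e_a−e_b−v_j} (x_a − x_b)² otherwise), f_G ∈ I_{m,3} if and only if rc(G) ≥ 3. -/

import Mathlib

/-- A walk is rainbow under edge coloring `c` if its edges have pairwise distinct colors. -/
def SimpleGraph.Walk.IsRainbow {V α : Type*} {G : SimpleGraph V} (c : Sym2 V → α)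
    {u v : V} (p : G.Walk u v) : Prop :=
  p.edges.Pairwise fun e f => c e ≠ c f

/-- A graph is rainbow connected under edge coloring `c` if every pair of vertices is joined
by a path all of whose edges have pairwise distinct colors. -/
def SimpleGraph.RainbowConnected {V α : Type*} (G : SimpleGraph V) (c : Sym2 V → α) : Prop :=
  ∀ u v : V, ∃ p : G.Walk u v, p.IsPath ∧ p.IsRainbow c

/-!
With two colours a rainbow path has length at most two, so a 2-colouring `c` rainbow-connects `G`
exactly when every nonadjacent pair `i, j` has a common neighbour `w` with `c(iw) ≠ c(wj)`.
A point `p` with at most two distinct coordinates is a 2-colouring of the edges up to renaming the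
colours, and since each nonadjacent factor `P_{i,j}(p)` is a sum of squares, `f_G(p) ≠ 0` says
precisely that `p` satisfies this condition.
-/

open Function MvPolynomial

namespace SimpleGraph

variable {V α : Type*} {G : SimpleGraph V}

theorem Walk.IsRainbow.length_le_card [Fintype α] {c : Sym2 V → α} {u v : V} {p : G.Walk u v}
    (h : p.IsRainbow c) : p.length ≤ Fintype.card α := by
  simpa [Walk.length_edges] using List.Nodup.length_le_card (List.pairwise_map.mpr h)

variable (G) in
def HasRainbowTwoPaths (ℓ : G.edgeSet → α) : Prop :=
  ∀ i j, i ≠ j → ¬ G.Adj i j → ∃ w, ∃ (hiw : G.Adj i w) (hwj : G.Adj w j),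
    ℓ ⟨s(i, w), G.mem_edgeSet.2 hiw⟩ ≠ ℓ ⟨s(w, j), G.mem_edgeSet.2 hwj⟩

theorem hasRainbowTwoPaths_comp_iff {β : Type*} {f : α → β} (hf : Injective f)
    {ℓ : G.edgeSet → α} : G.HasRainbowTwoPaths (f ∘ ℓ) ↔ G.HasRainbowTwoPaths ℓ := by
  simp [HasRainbowTwoPaths, hf.ne_iff]

theorem hasRainbowTwoPaths_iff_forall_lt [LinearOrder V] {ℓ : G.edgeSet → α} :
    G.HasRainbowTwoPaths ℓ ↔ ∀ i j, i < j → ¬ G.Adj i j → ∃ w, ∃ (hiw : G.Adj i w)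
      (hwj : G.Adj w j), ℓ ⟨s(i, w), G.mem_edgeSet.2 hiw⟩ ≠ ℓ ⟨s(w, j), G.mem_edgeSet.2 hwj⟩ := by
  refine ⟨fun h i j hij => h i j hij.ne, fun h i j hne hadj => ?_⟩
  obtain hij | hji := hne.lt_or_gt
  · exact h i j hij hadj
  · obtain ⟨w, hjw, hwi, hne⟩ := h j i hji (fun h' => hadj h'.symm)
    refine ⟨w, hwi.symm, hjw.symm, ?_⟩
    convert hne.symm using 3 <;> exact Sym2.eq_swap

theorem RainbowConnected.hasRainbowTwoPaths [Fintype α] (hα : Fintype.card α ≤ 2)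
    {c : Sym2 V → α} (h : G.RainbowConnected c) : G.HasRainbowTwoPaths (c ∘ Subtype.val) := by
  intro i j hne hadj
  obtain ⟨p, -, hp⟩ := h i j
  have hlen := hp.length_le_card.trans hα
  match p, hp, hlen with
  | .nil, _, _ => exact absurd rfl hne
  | .cons h .nil, _, _ => exact absurd h hadj
  | .cons hiw (.cons hwj .nil), hp, _ =>
    exact ⟨_, hiw, hwj, by simpa [Walk.IsRainbow] using hp⟩

theorem HasRainbowTwoPaths.rainbowConnected {c : Sym2 V → α}
    (h : G.HasRainbowTwoPaths (c ∘ Subtype.val)) : G.RainbowConnected c := by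
  intro i j
  by_cases hij : i = j
  · subst hij
    exact ⟨.nil, .nil, .nil⟩
  by_cases hadj : G.Adj i j
  · exact ⟨.cons hadj .nil, by simp [Walk.isPath_def, hij], by simp [Walk.IsRainbow]⟩
  obtain ⟨w, hiw, hwj, hc⟩ := h i j hij hadj
  exact ⟨.cons hiw (.cons hwj .nil), by simp [Walk.isPath_def, hij, hiw.ne, hwj.ne],
    by simpa [Walk.IsRainbow] using hc⟩

theorem exists_rainbowConnected_fin_two_iff [Finite V] {β : Type*} [Nontrivial β] :
    (∃ c : Sym2 V → Fin 2, G.RainbowConnected c) ↔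
      ∃ ℓ : G.edgeSet → β, (Set.range ℓ).ncard ≤ 2 ∧ G.HasRainbowTwoPaths ℓ := by
  constructor
  · rintro ⟨c, hc⟩
    obtain ⟨a, b, hab⟩ := exists_pair_ne β
    have hf : Injective ![a, b] := by
      intro i j; fin_cases i <;> fin_cases j <;> simp [hab, hab.symm]
    refine ⟨![a, b] ∘ c ∘ Subtype.val, ?_, (hasRainbowTwoPaths_comp_iff hf).2
      (hc.hasRainbowTwoPaths (by simp))⟩
    calc (Set.range (![a, b] ∘ c ∘ Subtype.val)).ncard ≤ (Set.range ![a, b]).ncard :=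
          Set.ncard_le_ncard (Set.range_comp_subset_range _ _) (Set.finite_range _)
      _ ≤ Nat.card (Fin 2) := Finite.card_range_le _
      _ = 2 := Nat.card_fin 2
  · rintro ⟨ℓ, hcard, hℓ⟩
    have := Fintype.ofFinite (Set.range ℓ)
    obtain ⟨e⟩ : Nonempty (Set.range ℓ ↪ Fin 2) := by
      apply Function.Embedding.nonempty_of_card_le
      rwa [Fintype.card_fin, ← Nat.card_eq_fintype_card, Nat.card_coe_set_eq]
    refine ⟨extend Subtype.val (e ∘ Set.rangeFactorization ℓ) 0,
      HasRainbowTwoPaths.rainbowConnected ?_⟩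
    rw [extend_comp Subtype.val_injective, hasRainbowTwoPaths_comp_iff e.injective,
      ← hasRainbowTwoPaths_comp_iff Subtype.val_injective]
    exact hℓ

end SimpleGraph

section PathPolynomial

open SimpleGraph

variable {V R : Type*} [Fintype V] (G : SimpleGraph V) [DecidableRel G.Adj]

noncomputable def pathPolynomial [CommRing R] (i j : V) : MvPolynomial G.edgeSet R :=
  if G.Adj i j then 1 else
    ∑ w : {w : V // G.Adj i w ∧ G.Adj w j},
      (X ⟨s(i, (w : V)), G.mem_edgeSet.2 w.2.1⟩ - X ⟨s((w : V), j), G.mem_edgeSet.2 w.2.2⟩) ^ 2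

variable [CommRing R] [LinearOrder R] [IsStrictOrderedRing R]

theorem eval_pathPolynomial_eq_zero_iff (p : G.edgeSet → R) (i j : V) :
    eval p (pathPolynomial G i j) = 0 ↔ ¬ G.Adj i j ∧ ∀ w (hiw : G.Adj i w) (hwj : G.Adj w j),
      p ⟨s(i, w), G.mem_edgeSet.2 hiw⟩ = p ⟨s(w, j), G.mem_edgeSet.2 hwj⟩ := by
  by_cases hadj : G.Adj i j
  · simp [pathPolynomial, hadj]
  simp only [pathPolynomial, hadj, if_false, not_false_eq_true, true_and, map_sum, map_pow,
    map_sub, eval_X]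
  rw [Finset.sum_eq_zero_iff_of_nonneg fun _ _ => sq_nonneg _]
  simp [sub_eq_zero]

theorem eval_prod_pathPolynomial_ne_zero_iff [LinearOrder V] (p : G.edgeSet → R) :
    eval p (∏ i, ∏ j ∈ Finset.univ.filter (fun j => i < j), pathPolynomial G i j) ≠ 0 ↔
      G.HasRainbowTwoPaths p := by
  simp [Finset.prod_eq_zero_iff, eval_pathPolynomial_eq_zero_iff,
    hasRainbowTwoPaths_iff_forall_lt]

end PathPolynomial

open MvPolynomial in
theorem graph_polynomial_mem_vanishing_ideal_iff_rc_ge_three_general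
    (n : ℕ) (G : SimpleGraph (Fin n)) [DecidableRel G.Adj]
    (fG : MvPolynomial G.edgeSet ℚ)
    (hfG : fG = ∏ i : Fin n, ∏ j ∈ Finset.univ.filter (fun j => i < j),
        (if G.Adj i j then (1 : MvPolynomial G.edgeSet ℚ) else
          ∑ w : {w : Fin n // G.Adj i w ∧ G.Adj w j},
            (X (⟨s(i, (w : Fin n)), G.mem_edgeSet.2 w.2.1⟩ : G.edgeSet)
              - X (⟨s((w : Fin n), j), G.mem_edgeSet.2 w.2.2⟩ : G.edgeSet)) ^ 2)) :
    (∀ p : G.edgeSet → ℚ, Set.ncard (Set.range p) ≤ 2 → eval p fG = 0) ↔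
      ¬ ∃ c : Sym2 (Fin n) → Fin 2, G.RainbowConnected c := by
  change fG = ∏ i, ∏ j ∈ Finset.univ.filter (fun j => i < j), pathPolynomial G i j at hfG
  rw [← not_iff_not, not_not, G.exists_rainbowConnected_fin_two_iff (β := ℚ), hfG]
  simp only [not_forall, exists_prop, eval_prod_pathPolynomial_ne_zero_iff]

open MvPolynomial in
/-- `f_G` lies in the vanishing ideal of the set of points with at most two distinct
coordinates iff `rc(G) ≥ 3`. -/
theorem graph_polynomial_mem_vanishing_ideal_iff_rc_ge_three
    (n : ℕ) (G : SimpleGraph (Fin n)) [DecidableRel G.Adj]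
    (hdiam : ∀ i j : Fin n, i ≠ j → ¬ G.Adj i j → ∃ w, G.Adj i w ∧ G.Adj w j)
    (fG : MvPolynomial G.edgeSet ℚ)
    (hfG : fG = ∏ i : Fin n, ∏ j ∈ Finset.univ.filter (fun j => i < j),
        (if G.Adj i j then (1 : MvPolynomial G.edgeSet ℚ) else
          ∑ w : {w : Fin n // G.Adj i w ∧ G.Adj w j},
            (X (⟨s(i, (w : Fin n)), G.mem_edgeSet.2 w.2.1⟩ : G.edgeSet)
              - X (⟨s((w : Fin n), j), G.mem_edgeSet.2 w.2.2⟩ : G.edgeSet)) ^ 2)) :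
    (∀ p : G.edgeSet → ℚ, Set.ncard (Set.range p) ≤ 2 → eval p fG = 0) ↔
      ¬ ∃ c : Sym2 (Fin n) → Fin 2, G.RainbowConnected c :=
  graph_polynomial_mem_vanishing_ideal_iff_rc_ge_three_general n G fG hfG
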